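/- The triple consisting of the set of weak compositions of n with k parts, the cyclic group Z_k acting by cyclic rotation of the parts, and the Gaussian binomial coefficient [n+k-1 choose n]_q exhibits the cyclic sieving phenomenon: for every r ≥ 0, the number of weak compositions (α_1,...,α_k) of n fixed by rotating r steps equals [n+k-1 choose n]_q evaluated at q = exp(2πi r/k). -/

import Mathlib

/-!
Let `e = k / gcd(k, r)`, the order of `r` in `ZMod k`. A composition fixed by rotation by `r` is
constant on the cosets of `⟨r⟩`, i.e. it is a function `β` on the `k / e` cosets with
`e * ∑ β = n`; there are `C(k/e + n/e - 1, n/e)` of them if `e ∣ n` and none otherwise.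
On the other side `ζ = exp(2πi r/k)` is a primitive `e`-th root of unity, and the q-Lucas theorem
`[m choose j]_ζ = C(m / e, j / e) * [m % e choose j % e]_ζ` gives the same value at
`m = n + k - 1`, `j = n`. Its right-hand side satisfies the q-Pascal recursion because
`[e choose j]_ζ = 0` for `0 < j < e`. This follows from
`[a + b choose a]_q φ_a φ_b = φ_(a + b)`, where `φ_m = ∏_{1 ≤ i ≤ m} (q ^ i - 1)`, since
`φ_m(ζ) = 0` exactly when `m ≥ e`.
-/

open Polynomial

/-- The Gaussian (q-)binomial coefficient `[m choose j]_q` as a polynomial,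
defined by the q-Pascal recursion. -/
noncomputable def gaussBinom : ℕ → ℕ → Polynomial ℂ
  | _, 0 => 1
  | 0, _ + 1 => 0
  | m + 1, j + 1 => gaussBinom m j + X ^ (j + 1) * gaussBinom m (j + 1)

lemma gaussBinom_succ_succ (m j : ℕ) :
    gaussBinom (m + 1) (j + 1) = gaussBinom m j + X ^ (j + 1) * gaussBinom m (j + 1) := rfl

@[simp]
lemma gaussBinom_zero_right (m : ℕ) : gaussBinom m 0 = 1 := by
  cases m <;> rfl

lemma gaussBinom_eq_zero_of_lt {m j : ℕ} (h : m < j) : gaussBinom m j = 0 := by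
  induction m generalizing j with
  | zero => obtain ⟨j, rfl⟩ := Nat.exists_eq_add_one.2 h; rfl
  | succ m ih =>
    obtain ⟨j, rfl⟩ := Nat.exists_eq_add_one.2 (Nat.zero_lt_of_lt h)
    rw [gaussBinom_succ_succ, ih (by omega), ih (by omega), mul_zero, add_zero]

@[simp]
lemma gaussBinom_self (m : ℕ) : gaussBinom m m = 1 := by
  induction m with
  | zero => rfl
  | succ m ih =>
    rw [gaussBinom_succ_succ, ih, gaussBinom_eq_zero_of_lt m.lt_succ_self, mul_zero, add_zero]

/-- `(X - 1) ^ m` times the q-factorial `[m]_q!`. -/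
noncomputable def qFactorial (m : ℕ) : ℂ[X] := ∏ i ∈ Finset.range m, (X ^ (i + 1) - 1)

lemma qFactorial_succ (m : ℕ) : qFactorial (m + 1) = qFactorial m * (X ^ (m + 1) - 1) :=
  Finset.prod_range_succ _ _

lemma gaussBinom_add_mul_qFactorial (a b : ℕ) :
    gaussBinom (a + b) a * qFactorial a * qFactorial b = qFactorial (a + b) := by
  induction a generalizing b with
  | zero => simp [qFactorial]
  | succ a iha =>
    induction b with
    | zero => simp [qFactorial]
    | succ b ihb =>
      have h₁ := iha (b + 1)
      rw [← add_assoc] at h₁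
      rw [show a + 1 + b = a + b + 1 by ring] at ihb
      rw [show a + 1 + (b + 1) = a + b + 1 + 1 by ring, gaussBinom_succ_succ]
      linear_combination
        gaussBinom (a + b + 1) a * qFactorial (b + 1) * qFactorial_succ a
        + (X ^ (a + 1) - 1) * h₁
        + X ^ (a + 1) * gaussBinom (a + b + 1) (a + 1) * qFactorial (a + 1) * qFactorial_succ b
        + X ^ (a + 1) * (X ^ (b + 1) - 1) * ihb - qFactorial_succ (a + b + 1)

lemma eval_gaussBinom_eq_of_pascal {ζ : ℂ} (f : ℕ → ℕ → ℂ) (hf₀ : ∀ m, f m 0 = 1)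
    (hf₁ : ∀ j, f 0 (j + 1) = 0)
    (hf : ∀ m j, f (m + 1) (j + 1) = f m j + ζ ^ (j + 1) * f m (j + 1)) (m j : ℕ) :
    (gaussBinom m j).eval ζ = f m j := by
  induction m generalizing j with
  | zero => cases j <;> simp [gaussBinom, hf₀, hf₁]
  | succ m ih =>
    cases j with
    | zero => simp [hf₀]
    | succ j => simp [gaussBinom_succ_succ, ih, hf]

section PrimitiveRoot

variable {ζ : ℂ} {e : ℕ}

lemma eval_qFactorial_ne_zero (hζ : IsPrimitiveRoot ζ e) {m : ℕ} (hm : m < e) :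
    (qFactorial m).eval ζ ≠ 0 := by
  simp only [qFactorial, eval_prod, eval_sub, eval_pow, eval_X, eval_one,
    Finset.prod_ne_zero_iff, Finset.mem_range, sub_ne_zero]
  exact fun i hi ↦ hζ.pow_ne_one_of_pos_of_lt i.succ_ne_zero (by omega)

lemma eval_qFactorial_self (hζ : IsPrimitiveRoot ζ e) (he : 0 < e) :
    (qFactorial e).eval ζ = 0 := by
  obtain ⟨f, rfl⟩ := Nat.exists_eq_add_one.2 he
  simp [qFactorial_succ, hζ.pow_eq_one]

lemma eval_gaussBinom_eq_zero (hζ : IsPrimitiveRoot ζ e) {j : ℕ} (hj₀ : 0 < j) (hj : j < e) :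
    (gaussBinom e j).eval ζ = 0 := by
  have h := congrArg (eval ζ) (gaussBinom_add_mul_qFactorial j (e - j))
  rw [Nat.add_sub_cancel' hj.le, eval_mul, eval_mul, eval_qFactorial_self hζ (by omega)] at h
  simpa [eval_qFactorial_ne_zero hζ hj, eval_qFactorial_ne_zero hζ (Nat.sub_lt (by omega) hj₀)]
    using h

end PrimitiveRoot

lemma div_mod_add_one_of_lt {m e : ℕ} (h : m % e + 1 < e) :
    (m + 1) / e = m / e ∧ (m + 1) % e = m % e + 1 :=
  (Nat.div_mod_unique (by omega)).2 ⟨by have := Nat.div_add_mod m e; omega, h⟩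

lemma div_mod_add_one_of_eq {m e : ℕ} (h : m % e + 1 = e) :
    (m + 1) / e = m / e + 1 ∧ (m + 1) % e = 0 :=
  (Nat.div_mod_unique (by omega)).2
    ⟨by have := Nat.div_add_mod m e; rw [mul_add]; omega, by omega⟩

/-- The right-hand side of the q-Lucas theorem. -/
noncomputable def qLucasValue (ζ : ℂ) (e m j : ℕ) : ℂ :=
  (m / e).choose (j / e) * (gaussBinom (m % e) (j % e)).eval ζ

section QLucas

variable {ζ : ℂ} {e : ℕ}

lemma qLucasValue_zero_right (m : ℕ) : qLucasValue ζ e m 0 = 1 := by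
  simp [qLucasValue]

lemma qLucasValue_zero_add_one (he : 0 < e) (j : ℕ) : qLucasValue ζ e 0 (j + 1) = 0 := by
  rcases Nat.eq_zero_or_pos ((j + 1) % e) with h | h
  · have hpos : 0 < (j + 1) / e :=
      Nat.div_pos (Nat.le_of_dvd j.succ_pos (Nat.dvd_of_mod_eq_zero h)) he
    simp [qLucasValue, Nat.choose_eq_zero_of_lt hpos]
  · simp [qLucasValue, gaussBinom_eq_zero_of_lt h]

lemma qLucasValue_add_one_add_one (hζ : IsPrimitiveRoot ζ e) (he : 0 < e) (m j : ℕ) :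
    qLucasValue ζ e (m + 1) (j + 1)
      = qLucasValue ζ e m j + ζ ^ (j + 1) * qLucasValue ζ e m (j + 1) := by
  simp only [qLucasValue]
  rw [← pow_mod_orderOf ζ (j + 1), ← hζ.eq_orderOf]
  have := Nat.mod_lt m he
  have := Nat.mod_lt j he
  rcases (show m % e + 1 < e ∨ m % e + 1 = e by omega) with hm | hm <;>
    rcases (show j % e + 1 < e ∨ j % e + 1 = e by omega) with hj | hj
  · obtain ⟨hm₁, hm₂⟩ := div_mod_add_one_of_lt hm
    obtain ⟨hj₁, hj₂⟩ := div_mod_add_one_of_lt hj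
    rw [hm₁, hm₂, hj₁, hj₂, gaussBinom_succ_succ, eval_add, eval_mul, eval_pow, eval_X]
    ring
  · obtain ⟨hm₁, hm₂⟩ := div_mod_add_one_of_lt hm
    obtain ⟨hj₁, hj₂⟩ := div_mod_add_one_of_eq hj
    rw [hm₁, hm₂, hj₁, hj₂, gaussBinom_eq_zero_of_lt (by omega : m % e < j % e)]
    simp
  · obtain ⟨hm₁, hm₂⟩ := div_mod_add_one_of_eq hm
    obtain ⟨hj₁, hj₂⟩ := div_mod_add_one_of_lt hj
    have h : (gaussBinom (m % e + 1) (j % e + 1)).eval ζ = 0 := by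
      rw [hm]; exact eval_gaussBinom_eq_zero hζ (j % e).succ_pos hj
    rw [gaussBinom_succ_succ, eval_add, eval_mul, eval_pow, eval_X] at h
    rw [hm₁, hm₂, hj₁, hj₂, gaussBinom_eq_zero_of_lt (j % e).succ_pos, eval_zero]
    linear_combination -((m / e).choose (j / e) : ℂ) * h
  · obtain ⟨hm₁, hm₂⟩ := div_mod_add_one_of_eq hm
    obtain ⟨hj₁, hj₂⟩ := div_mod_add_one_of_eq hj
    rw [hm₁, hm₂, hj₁, hj₂, show j % e = m % e by omega, Nat.choose_succ_succ]
    simp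

theorem eval_gaussBinom_eq_qLucasValue (hζ : IsPrimitiveRoot ζ e) (he : 0 < e) (m j : ℕ) :
    (gaussBinom m j).eval ζ = qLucasValue ζ e m j :=
  eval_gaussBinom_eq_of_pascal _ qLucasValue_zero_right (qLucasValue_zero_add_one he)
    (qLucasValue_add_one_add_one hζ he) m j

end QLucas

lemma eval_gaussBinom_add_sub_one {ζ : ℂ} {e k : ℕ} (hζ : IsPrimitiveRoot ζ e) (he : 0 < e)
    (hk : 0 < k) (hek : e ∣ k) (n : ℕ) :
    (gaussBinom (n + k - 1) n).eval ζ
      = if e ∣ n then ((k / e + n / e - 1).choose (n / e) : ℂ) else 0 := by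
  rw [eval_gaussBinom_eq_qLucasValue hζ he, qLucasValue]
  obtain ⟨c, rfl⟩ := hek
  obtain ⟨c, rfl⟩ := Nat.exists_eq_add_one.2 (Nat.pos_of_mul_pos_left hk)
  have hec : e * (c + 1) = e * c + e := mul_add_one e c
  split_ifs with hn
  · obtain ⟨a, rfl⟩ := hn
    obtain ⟨hdiv, hmod⟩ : (e * a + e * (c + 1) - 1) / e = a + c ∧
        (e * a + e * (c + 1) - 1) % e = e - 1 :=
      (Nat.div_mod_unique he).2 ⟨by rw [mul_add]; omega, by omega⟩
    rw [hdiv, hmod, Nat.mul_div_cancel_left _ he, Nat.mul_div_cancel_left _ he, Nat.mul_mod_right,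
      gaussBinom_zero_right, eval_one, mul_one, show c + 1 + a - 1 = a + c by omega]
  · have hn₀ : 0 < n % e := Nat.pos_of_ne_zero fun h ↦ hn (Nat.dvd_of_mod_eq_zero h)
    obtain ⟨-, hmod⟩ : (n + e * (c + 1) - 1) / e = n / e + (c + 1) ∧
        (n + e * (c + 1) - 1) % e = n % e - 1 :=
      (Nat.div_mod_unique he).2
        ⟨by have := Nat.mod_add_div n e; rw [mul_add, hec]; omega,
          by have := Nat.mod_lt n he; omega⟩
    rw [hmod, gaussBinom_eq_zero_of_lt (Nat.sub_lt hn₀ one_pos), eval_zero, mul_zero]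

lemma card_mul_sum_eq {ι : Type*} [Fintype ι] {c : ℕ} (hc : 0 < c) (n : ℕ) :
    Nat.card {β : ι → ℕ // c * ∑ i, β i = n}
      = if c ∣ n then (Fintype.card ι + n / c - 1).choose (n / c) else 0 := by
  classical
  split_ifs with hn
  · obtain ⟨a, rfl⟩ := hn
    rw [Nat.mul_div_cancel_left a hc, ← Sym.card_sym_eq_choose, ← Nat.card_eq_fintype_card,
      Nat.card_congr (Sym.equivNatSumOfFintype ι a)]
    exact Nat.card_congr (Equiv.subtypeEquivRight fun β ↦ Nat.mul_left_cancel_iff hc)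
  · have : IsEmpty {β : ι → ℕ // c * ∑ i, β i = n} :=
      ⟨fun β ↦ hn ⟨_, β.2.symm⟩⟩
    exact Nat.card_of_isEmpty

section Periodic

open Function QuotientAddGroup AddSubgroup

variable {G : Type*} [AddGroup G]

lemma Function.Periodic.apply_out_mk {M : Type*} {α : G → M} {g : G} (h : Periodic α g)
    (i : G) :
    α (i : G ⧸ zmultiples g).out = α i := by
  obtain ⟨⟨_, z, rfl⟩, hz⟩ := mk_out_eq_add (zmultiples g) i
  rw [hz]
  exact h.zsmul z i

noncomputable def periodicEquiv (M : Type*) (g : G) :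
    {α : G → M // Periodic α g} ≃ (G ⧸ zmultiples g → M) where
  toFun α q := α.1 q.out
  invFun β := ⟨fun i ↦ β i, fun i ↦ congrArg β (mk_add_of_mem i (mem_zmultiples g))⟩
  left_inv α := Subtype.ext <| funext α.2.apply_out_mk
  right_inv β := funext fun q ↦ congrArg β (out_eq' q)

lemma sum_comp_mk [Fintype G] {M : Type*} [AddCommMonoid M] (H : AddSubgroup G)
    [Fintype (G ⧸ H)] [DecidableEq (G ⧸ H)] (β : G ⧸ H → M) :
    ∑ i : G, β i = Nat.card H • ∑ q, β q := by
  rw [← Fintype.sum_fiberwise (fun i : G ↦ (i : G ⧸ H)), Finset.smul_sum]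
  refine Finset.sum_congr rfl fun q _ ↦ ?_
  have hcard : Fintype.card {i : G // (i : G ⧸ H) = q} = Nat.card H := by
    have h := Nat.card_congr (preimageMkEquivAddSubgroupProdSet H {q})
    rw [Nat.card_prod, Nat.card_unique (α := ({q} : Set (G ⧸ H))), mul_one] at h
    rw [← Nat.card_eq_fintype_card, ← h]
    rfl
  rw [Finset.sum_congr rfl fun i _ ↦ congrArg β i.2, Finset.sum_const, Finset.card_univ, hcard]

lemma card_periodic_sum_eq_card_quotient [Fintype G] (g : G) (n : ℕ) :
    Nat.card {α : G → ℕ // ∑ i, α i = n ∧ Periodic α g}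
      = Nat.card {β : G ⧸ zmultiples g → ℕ // addOrderOf g * ∑ q, β q = n} := by
  classical
  refine (Nat.card_congr ?_).symm
  refine .trans ?_ ((Equiv.subtypeSubtypeEquivSubtypeInter _ _).trans
    (Equiv.subtypeEquivRight fun _ ↦ and_comm))
  refine Equiv.subtypeEquiv (periodicEquiv ℕ g).symm fun β ↦ ?_
  rw [← Nat.card_zmultiples, ← smul_eq_mul, ← sum_comp_mk]
  rfl

theorem card_periodic_sum_eq [Fintype G] (g : G) (n : ℕ) :
    Nat.card {α : G → ℕ // ∑ i, α i = n ∧ Periodic α g}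
      = if addOrderOf g ∣ n then
          (Nat.card G / addOrderOf g + n / addOrderOf g - 1).choose (n / addOrderOf g)
        else 0 := by
  classical
  have hcard : Fintype.card (G ⧸ zmultiples g) = Nat.card G / addOrderOf g := by
    rw [← Nat.card_eq_fintype_card, ← (zmultiples g).index_mul_card, Nat.card_zmultiples,
      Nat.mul_div_cancel _ (addOrderOf_pos g), index]
  rw [card_periodic_sum_eq_card_quotient, card_mul_sum_eq (addOrderOf_pos g), hcard]

end Periodic

lemma Complex.isPrimitiveRoot_exp_natCast_mul_div {k : ℕ} (hk : k ≠ 0) (r : ℕ) :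
    IsPrimitiveRoot (exp (2 * Real.pi * I * r / k)) (k / k.gcd r) := by
  have hζ := isPrimitiveRoot_exp k hk
  rw [show 2 * Real.pi * I * r / k = r * (2 * Real.pi * I / k) by ring, exp_nat_mul,
    IsPrimitiveRoot.iff_orderOf, (hζ.isOfFinOrder hk).orderOf_pow, ← hζ.eq_orderOf]

/-- Cyclic sieving for weak compositions of `n` with `k` parts under cyclic rotation of the
parts, with sieving polynomial `[n+k-1 choose n]_q`: the number of weak compositions fixed
by rotating `r` steps equals `[n+k-1 choose n]_q` at `q = exp(2πi r/k)`. -/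
theorem stmt_1 (n k : ℕ) [NeZero k] (r : ℕ) :
    (Nat.card {α : ZMod k → ℕ // (∑ i, α i) = n ∧ ∀ i, α (i + (r : ZMod k)) = α i} : ℂ) =
      (gaussBinom (n + k - 1) n).eval (Complex.exp (2 * Real.pi * Complex.I * r / k)) := by
  have hk : k ≠ 0 := NeZero.ne k
  have hord : addOrderOf (r : ZMod k) = k / k.gcd r := ZMod.addOrderOf_coe r hk
  have hζ := Complex.isPrimitiveRoot_exp_natCast_mul_div hk r
  rw [← hord] at hζ
  have hcount := card_periodic_sum_eq (r : ZMod k) n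
  unfold Function.Periodic at hcount
  rw [hcount, Nat.card_zmod,
    eval_gaussBinom_add_sub_one hζ (addOrderOf_pos _) (Nat.pos_of_ne_zero hk)
      (hord ▸ Nat.div_dvd_of_dvd (k.gcd_dvd_left r))]
  split_ifs <;> simp
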